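/- arXiv:2410.10368 — 3 statements merged into one kernel-verified Lean document; each statement's English description precedes it below -/
import Mathlib

section
/- For every natural number k, Σ_{p=0}^{k} ((2p−1)‼ · (2(k−p)−1)‼) / (2^p · p! · 2^{k−p} · (k−p)!) = 1, where m‼ denotes the double factorial (with the convention that the double factorial of a value below 1 equals 1). -/
open scoped Nat

noncomputable def fseq (p : ℕ) : ℝ := ((2 * p - 1)‼ : ℕ) / ((2 ^ p * Nat.factorial p : ℕ) : ℝ)

lemma fseq_zero : fseq 0 = 1 := by simp [fseq, Nat.doubleFactorial]

lemma df_rec (p : ℕ) : (2 * (p + 1) - 1)‼ = (2 * p + 1) * (2 * p - 1)‼ := by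
  rcases p with _ | q
  · rfl
  · rw [show 2 * (q + 1 + 1) - 1 = (2 * (q + 1) - 1) + 2 by omega,
      Nat.doubleFactorial_add_two]
    congr 1

lemma fseq_rec (p : ℕ) : ((p : ℝ) + 1) * fseq (p + 1) = ((p : ℝ) + 1 / 2) * fseq p := by
  have h1 : (Nat.factorial p : ℝ) ≠ 0 := Nat.cast_ne_zero.mpr (Nat.factorial_ne_zero p)
  have h2 : (2 : ℝ) ^ p ≠ 0 := by positivity
  have h3 : ((p : ℝ) + 1) ≠ 0 := by positivity
  rw [fseq, fseq, df_rec, Nat.factorial_succ]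
  push_cast
  field_simp
  ring

lemma refl_sum (n : ℕ) (w : ℕ → ℝ) :
    ∑ p ∈ Finset.range (n + 1), w (n - p) * (fseq (n - p) * fseq p) =
      ∑ p ∈ Finset.range (n + 1), w p * (fseq p * fseq (n - p)) := by
  rw [← Finset.sum_range_reflect]
  apply Finset.sum_congr rfl
  intro j hj
  simp only [Finset.mem_range] at hj
  rw [show n + 1 - 1 - j = n - j by omega, Nat.sub_sub_self (by omega)]

lemma S_succ (k : ℕ) :
    ∑ p ∈ Finset.range (k + 2), fseq p * fseq (k + 1 - p) =
      ∑ p ∈ Finset.range (k + 1), fseq p * fseq (k - p) := by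
  have hA : ∑ p ∈ Finset.range (k + 2), (p : ℝ) * (fseq p * fseq (k + 1 - p)) =
      ∑ p ∈ Finset.range (k + 1), ((p : ℝ) + 1 / 2) * (fseq p * fseq (k - p)) := by
    rw [Finset.sum_range_succ']
    simp only [Nat.cast_zero, zero_mul, add_zero, Nat.cast_add, Nat.cast_one]
    apply Finset.sum_congr rfl
    intro i hi
    have h : k + 1 - (i + 1) = k - i := by omega
    rw [h]
    linear_combination (fseq_rec i) * fseq (k - i)
  have hrefl1 : ∑ p ∈ Finset.range (k + 2), (((k+1 : ℕ) : ℝ) - p) * (fseq p * fseq (k + 1 - p)) =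
      ∑ p ∈ Finset.range (k + 2), (p : ℝ) * (fseq p * fseq (k + 1 - p)) := by
    rw [← refl_sum (k+1) (fun p => (p : ℝ))]
    apply Finset.sum_congr rfl
    intro j hj
    simp only [Finset.mem_range] at hj
    rw [Nat.cast_sub (by omega)]
    ring_nf
  have hrefl2 : ∑ p ∈ Finset.range (k + 1), (((k : ℕ) : ℝ) - p + 1/2) * (fseq p * fseq (k - p)) =
      ∑ p ∈ Finset.range (k + 1), ((p : ℝ) + 1/2) * (fseq p * fseq (k - p)) := by
    rw [← refl_sum k (fun p => (p : ℝ) + 1/2)]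
    apply Finset.sum_congr rfl
    intro j hj
    simp only [Finset.mem_range] at hj
    rw [Nat.cast_sub (by omega)]
    ring_nf
  have key : ((k:ℝ) + 1) * (∑ p ∈ Finset.range (k + 2), fseq p * fseq (k + 1 - p)) =
      ((k:ℝ) + 1) * (∑ p ∈ Finset.range (k + 1), fseq p * fseq (k - p)) := by
    have e1 : ((k:ℝ) + 1) * (∑ p ∈ Finset.range (k + 2), fseq p * fseq (k + 1 - p)) =
        2 * ∑ p ∈ Finset.range (k + 2), (p : ℝ) * (fseq p * fseq (k + 1 - p)) := by
      rw [Finset.mul_sum, two_mul]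
      nth_rewrite 1 [← hrefl1]
      rw [← Finset.sum_add_distrib]
      apply Finset.sum_congr rfl
      intro j hj
      push_cast
      ring
    have e2 : ((k:ℝ) + 1) * (∑ p ∈ Finset.range (k + 1), fseq p * fseq (k - p)) =
        2 * ∑ p ∈ Finset.range (k + 1), ((p : ℝ) + 1/2) * (fseq p * fseq (k - p)) := by
      rw [Finset.mul_sum, two_mul]
      nth_rewrite 1 [← hrefl2]
      rw [← Finset.sum_add_distrib]
      apply Finset.sum_congr rfl
      intro j hj
      ring
    rw [e1, e2, hA]
  have hk : ((k:ℝ) + 1) ≠ 0 := by positivity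
  exact mul_left_cancel₀ hk key

lemma S_eq_one (k : ℕ) : ∑ p ∈ Finset.range (k + 1), fseq p * fseq (k - p) = 1 := by
  induction k with
  | zero => simp [fseq_zero]
  | succ n ih => rw [S_succ, ih]


/-- `f k = (2k-1)‼ / (2^k k!)` is the discrete deconvolution of the constant sequence `1`. -/
theorem stmt_4 (k : ℕ) :
    ∑ p ∈ Finset.range (k + 1),
        (((2 * p - 1)‼ * (2 * (k - p) - 1)‼ : ℕ) : ℝ) /
          ((2 ^ p * Nat.factorial p * 2 ^ (k - p) * Nat.factorial (k - p) : ℕ) : ℝ) = 1 := by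
  rw [← S_eq_one k]
  apply Finset.sum_congr rfl
  intro p hp
  rw [fseq, fseq, div_mul_div_comm]
  push_cast
  ring
end

section
/- Let A₁ be a symmetric N₁×N₁ real matrix and A₂ a symmetric N₂×N₂ real matrix. Let n be a natural number and f₀,…,fₙ real numbers (set f_j = 0 for j > n), with μ_k = Σ_{p=0}^{k} f_p f_{k-p} for 0 ≤ k ≤ 2n. Let v₁, w₁ ∈ ℝ^{N₁}, v₂, w₂ ∈ ℝ^{N₂}, and let v, w ∈ ℝ^{N₁·N₂} be the flattened outer products v_{(i₁,i₂)} = v₁(i₁)v₂(i₂), w_{(j₁,j₂)} = w₁(j₁)w₂(j₂). Then vᵀ (Σ_{k=0}^{2n} μ_k (A₁ ⊗ A₂)^k) w = Σ_{i=0}^{n} Σ_{j=0}^{n} f_i f_j · (v₁ᵀ A₁^i (A₁^j)ᵀ w₁) · (v₂ᵀ A₂^i (A₂^j)ᵀ w₂), where A₁ ⊗ A₂ is the Kronecker product. -/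
open Matrix
open scoped Kronecker

lemma kron_pow {m n : Type*} [Fintype m] [Fintype n] [DecidableEq m] [DecidableEq n]
    (A : Matrix m m ℝ) (B : Matrix n n ℝ) (k : ℕ) :
    (A ⊗ₖ B) ^ k = (A ^ k) ⊗ₖ (B ^ k) := by
  induction k with
  | zero => simp [Matrix.one_kronecker_one]
  | succ k ih => rw [pow_succ, pow_succ, pow_succ, ih, Matrix.mul_kronecker_mul]

lemma dot_kron {m n : Type*} [Fintype m] [Fintype n]
    (M : Matrix m m ℝ) (N : Matrix n n ℝ)
    (v₁ w₁ : m → ℝ) (v₂ w₂ : n → ℝ) (v w : m × n → ℝ)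
    (hv : ∀ i, v i = v₁ i.1 * v₂ i.2) (hw : ∀ j, w j = w₁ j.1 * w₂ j.2) :
    v ⬝ᵥ (M ⊗ₖ N) *ᵥ w = (v₁ ⬝ᵥ M *ᵥ w₁) * (v₂ ⬝ᵥ N *ᵥ w₂) := by
  simp only [dotProduct, mulVec, hv, hw, kroneckerMap_apply]
  rw [Finset.sum_mul_sum]
  simp only [Fintype.sum_prod_type]
  refine Finset.sum_congr rfl fun i₁ _ => Finset.sum_congr rfl fun i₂ _ => ?_
  rw [mul_mul_mul_comm, Finset.sum_mul_sum]
  simp only [Finset.mul_sum]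
  exact Finset.sum_congr rfl fun j₁ _ => Finset.sum_congr rfl fun j₂ _ => by ring

lemma sum_mulVec' {ι m' : Type*} [Fintype m'] (s : Finset ι)
    (M : ι → Matrix m' m' ℝ) (x : m' → ℝ) :
    (∑ k ∈ s, M k) *ᵥ x = ∑ k ∈ s, M k *ᵥ x := by
  ext i
  simp only [Matrix.mulVec, dotProduct, Matrix.sum_apply, Finset.sum_apply,
    Finset.sum_mul]
  rw [Finset.sum_comm]

lemma dot_sum {ι m' : Type*} [Fintype m'] (s : Finset ι) (v : m' → ℝ) (x : ι → m' → ℝ) :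
    v ⬝ᵥ (∑ k ∈ s, x k) = ∑ k ∈ s, v ⬝ᵥ x k := by
  simp only [dotProduct, Finset.sum_apply, Finset.mul_sum]
  exact Finset.sum_comm

lemma conv_sum (n : ℕ) (f : ℕ → ℝ) (hf : ∀ j, n < j → f j = 0) (g : ℕ → ℝ) :
    ∑ k ∈ Finset.range (2 * n + 1), (∑ p ∈ Finset.range (k + 1), f p * f (k - p)) * g k =
      ∑ i ∈ Finset.range (n + 1), ∑ j ∈ Finset.range (n + 1), f i * f j * g (i + j) := by
  simp only [Finset.sum_mul]
  rw [Finset.sum_sigma' (Finset.range (2 * n + 1)) (fun k => Finset.range (k + 1))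
      (f := fun k p => f p * f (k - p) * g k),
    ← Finset.sum_product' (f := fun i j => f i * f j * g (i + j))]
  refine Finset.sum_bij_ne_zero (fun x _ _ => (x.2, x.1 - x.2)) ?_ ?_ ?_ ?_
  · rintro ⟨k, p⟩ h₁ h₂
    simp only [Finset.mem_sigma, Finset.mem_range] at h₁
    simp only [Finset.mem_product, Finset.mem_range]
    constructor
    · by_contra hc
      exact h₂ (by simp [hf p (by omega)])
    · by_contra hc
      exact h₂ (by simp [hf (k - p) (by omega)])
  · rintro ⟨k, p⟩ h₁ - ⟨k', p'⟩ h₁' -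
    intro he
    simp only [Finset.mem_sigma, Finset.mem_range] at h₁ h₁'
    simp only [Prod.mk.injEq] at he
    have hp : p = p' := he.1
    have hk : k = k' := by omega
    simp [hp, hk]
  · rintro ⟨i, j⟩ hm hne
    simp only [Finset.mem_product, Finset.mem_range] at hm
    refine ⟨⟨i + j, i⟩, ?_, ?_, ?_⟩
    · simp only [Finset.mem_sigma, Finset.mem_range]; omega
    · simpa [Nat.add_sub_cancel_left] using hne
    · simp
  · rintro ⟨k, p⟩ h₁ -
    simp only [Finset.mem_sigma, Finset.mem_range] at h₁
    simp only
    rw [Nat.add_sub_cancel' (by omega : p ≤ k)]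

/-- Exact factorization of the random walk kernel: for symmetric `A₁, A₂`, `f` supported on
`{0,…,n}`, `μ_k = ∑_{p=0}^k f_p f_{k-p}`, and flattened outer-product vectors `v, w`,
`vᵀ (∑_{k=0}^{2n} μ_k (A₁ ⊗ A₂)^k) w
  = ∑_{i,j=0}^{n} f_i f_j (v₁ᵀ A₁^i (A₁^j)ᵀ w₁)(v₂ᵀ A₂^i (A₂^j)ᵀ w₂)`. -/
theorem stmt_9 {N₁ N₂ : ℕ}
    (A₁ : Matrix (Fin N₁) (Fin N₁) ℝ) (A₂ : Matrix (Fin N₂) (Fin N₂) ℝ)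
    (hA₁ : A₁.IsSymm) (hA₂ : A₂.IsSymm)
    (n : ℕ) (f : ℕ → ℝ) (hf : ∀ j, n < j → f j = 0)
    (μ : ℕ → ℝ) (hμ : ∀ k ≤ 2 * n, μ k = ∑ p ∈ Finset.range (k + 1), f p * f (k - p))
    (v₁ w₁ : Fin N₁ → ℝ) (v₂ w₂ : Fin N₂ → ℝ)
    (v w : Fin N₁ × Fin N₂ → ℝ)
    (hv : ∀ i : Fin N₁ × Fin N₂, v i = v₁ i.1 * v₂ i.2)
    (hw : ∀ j : Fin N₁ × Fin N₂, w j = w₁ j.1 * w₂ j.2) :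
    v ⬝ᵥ (∑ k ∈ Finset.range (2 * n + 1), μ k • (A₁ ⊗ₖ A₂) ^ k) *ᵥ w =
      ∑ i ∈ Finset.range (n + 1), ∑ j ∈ Finset.range (n + 1),
        f i * f j * ((v₁ ⬝ᵥ (A₁ ^ i * (A₁ ^ j)ᵀ) *ᵥ w₁) *
          (v₂ ⬝ᵥ (A₂ ^ i * (A₂ ^ j)ᵀ) *ᵥ w₂)) := by
  have key : v ⬝ᵥ (∑ k ∈ Finset.range (2 * n + 1), μ k • (A₁ ⊗ₖ A₂) ^ k) *ᵥ w =
      ∑ k ∈ Finset.range (2 * n + 1),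
        μ k * ((v₁ ⬝ᵥ (A₁ ^ k) *ᵥ w₁) * (v₂ ⬝ᵥ (A₂ ^ k) *ᵥ w₂)) := by
    rw [sum_mulVec', dot_sum]
    refine Finset.sum_congr rfl fun k _ => ?_
    rw [Matrix.smul_mulVec, dotProduct_smul, smul_eq_mul, kron_pow,
      dot_kron _ _ _ _ _ _ _ _ hv hw]
  rw [key]
  have hcong : ∀ k ∈ Finset.range (2 * n + 1),
      μ k * ((v₁ ⬝ᵥ (A₁ ^ k) *ᵥ w₁) * (v₂ ⬝ᵥ (A₂ ^ k) *ᵥ w₂)) =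
      (∑ p ∈ Finset.range (k + 1), f p * f (k - p)) *
        ((v₁ ⬝ᵥ (A₁ ^ k) *ᵥ w₁) * (v₂ ⬝ᵥ (A₂ ^ k) *ᵥ w₂)) := by
    intro k hk
    rw [hμ k (by simpa [Nat.lt_succ_iff] using hk)]
  rw [Finset.sum_congr rfl hcong,
    conv_sum n f hf (fun k => (v₁ ⬝ᵥ (A₁ ^ k) *ᵥ w₁) * (v₂ ⬝ᵥ (A₂ ^ k) *ᵥ w₂))]
  refine Finset.sum_congr rfl fun i _ => Finset.sum_congr rfl fun j _ => ?_
  rw [Matrix.transpose_pow, Matrix.transpose_pow, hA₁.eq, hA₂.eq, ← pow_add, ← pow_add]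
end

section
/- Let m ≥ 1 be a natural number, c ≥ 0, and let C_k, C'_k, D_k, D'_k (k = 1,…,m) be real N×r matrices such that every row of each of them has ℓ₁ norm at most c, and such that there is an index k₀ with C_k = C'_k and D_k = D'_k for all k ≠ k₀. Set C = (1/m)Σ_{k=1}^m C_k, D = (1/m)Σ_{k=1}^m D_k, C' = (1/m)Σ_{k=1}^m C'_k, D' = (1/m)Σ_{k=1}^m D'_k. Then for all v, w ∈ ℝ^N, |vᵀ C Dᵀ w − vᵀ C' D'ᵀ w| ≤ (2(2m−1)/m²) · c² · ‖v‖₁ · ‖w‖₁. -/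
open Matrix

lemma aux_bound {N r : ℕ} (c : ℝ) (hc : 0 ≤ c) (A B : Matrix (Fin N) (Fin r) ℝ)
    (hA : ∀ i, ∑ j, |A i j| ≤ c) (hB : ∀ i, ∑ j, |B i j| ≤ c)
    (v w : Fin N → ℝ) :
    |v ⬝ᵥ (A * Bᵀ) *ᵥ w| ≤ c ^ 2 * (∑ i, |v i|) * (∑ i, |w i|) := by
  have hentry : ∀ i i', |∑ j, A i j * B i' j| ≤ c ^ 2 := by
    intro i i'
    calc |∑ j, A i j * B i' j| ≤ ∑ j, |A i j * B i' j| := Finset.abs_sum_le_sum_abs _ _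
      _ ≤ ∑ j, |A i j| * c := by
          refine Finset.sum_le_sum fun j _ => ?_
          rw [abs_mul]
          exact mul_le_mul_of_nonneg_left
            (le_trans (Finset.single_le_sum (fun j' _ => abs_nonneg (B i' j')) (Finset.mem_univ j)) (hB i'))
            (abs_nonneg _)
      _ = (∑ j, |A i j|) * c := by rw [Finset.sum_mul]
      _ ≤ c * c := mul_le_mul_of_nonneg_right (hA i) hc
      _ = c ^ 2 := (sq c).symm
  have expand : v ⬝ᵥ (A * Bᵀ) *ᵥ w = ∑ i, v i * ∑ i', (∑ j, A i j * B i' j) * w i' := by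
    simp [dotProduct, mulVec, Matrix.mul_apply, Matrix.transpose_apply]
  rw [expand]
  calc |∑ i, v i * ∑ i', (∑ j, A i j * B i' j) * w i'|
      ≤ ∑ i, |v i * ∑ i', (∑ j, A i j * B i' j) * w i'| := Finset.abs_sum_le_sum_abs _ _
    _ ≤ ∑ i, |v i| * (c ^ 2 * ∑ i', |w i'|) := by
        refine Finset.sum_le_sum fun i _ => ?_
        rw [abs_mul]
        refine mul_le_mul_of_nonneg_left ?_ (abs_nonneg _)
        calc |∑ i', (∑ j, A i j * B i' j) * w i'|
            ≤ ∑ i', |(∑ j, A i j * B i' j) * w i'| := Finset.abs_sum_le_sum_abs _ _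
          _ ≤ ∑ i', c ^ 2 * |w i'| := by
              refine Finset.sum_le_sum fun i' _ => ?_
              rw [abs_mul]
              exact mul_le_mul_of_nonneg_right (hentry i i') (abs_nonneg _)
          _ = c ^ 2 * ∑ i', |w i'| := by rw [Finset.mul_sum]
    _ = c ^ 2 * (∑ i, |v i|) * (∑ i, |w i|) := by rw [← Finset.sum_mul]; ring

/-- Bounded-difference lemma for the bilinear form: if the feature matrices are averages
of `m` per-walk matrices whose rows have ℓ₁ norm at most `c`, and the matrices agree for
all indices except one, then `vᵀ C Dᵀ w` changes by at most `2(2m-1)c²‖v‖₁‖w‖₁/m²`. -/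
theorem stmt_17 {m N r : ℕ} (hm : 1 ≤ m) (c : ℝ) (hc : 0 ≤ c)
    (C C' D D' : Fin m → Matrix (Fin N) (Fin r) ℝ)
    (hC : ∀ k i, ∑ j, |C k i j| ≤ c) (hC' : ∀ k i, ∑ j, |C' k i j| ≤ c)
    (hD : ∀ k i, ∑ j, |D k i j| ≤ c) (hD' : ∀ k i, ∑ j, |D' k i j| ≤ c)
    (k₀ : Fin m) (hagree : ∀ k, k ≠ k₀ → C k = C' k ∧ D k = D' k)
    (v w : Fin N → ℝ) :
    |v ⬝ᵥ (((m : ℝ)⁻¹ • ∑ k, C k) * ((m : ℝ)⁻¹ • ∑ k, D k)ᵀ) *ᵥ w -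
        v ⬝ᵥ (((m : ℝ)⁻¹ • ∑ k, C' k) * ((m : ℝ)⁻¹ • ∑ k, D' k)ᵀ) *ᵥ w| ≤
      2 * (2 * (m : ℝ) - 1) / (m : ℝ) ^ 2 * c ^ 2 * (∑ i, |v i|) * (∑ i, |w i|) := by
  set V := ∑ i, |v i| with hV
  set W := ∑ i, |w i| with hW
  have hVn : 0 ≤ V := Finset.sum_nonneg fun _ _ => abs_nonneg _
  have hWn : 0 ≤ W := Finset.sum_nonneg fun _ _ => abs_nonneg _
  have hmpos : (0:ℝ) < m := by exact_mod_cast hm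
  -- the linear functional M ↦ v ⬝ᵥ M *ᵥ w
  let L : Matrix (Fin N) (Fin N) ℝ →ₗ[ℝ] ℝ :=
    { toFun := fun M => v ⬝ᵥ M *ᵥ w
      map_add' := fun M M' => by simp [Matrix.add_mulVec, dotProduct_add]
      map_smul' := fun a M => by
        simp [smul_mulVec, dotProduct_smul, smul_eq_mul] }
  have key : ∀ (A B : Fin m → Matrix (Fin N) (Fin r) ℝ),
      v ⬝ᵥ (((m : ℝ)⁻¹ • ∑ k, A k) * ((m : ℝ)⁻¹ • ∑ k, B k)ᵀ) *ᵥ w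
        = ((m:ℝ)^2)⁻¹ * ∑ k, ∑ l, L (A k * (B l)ᵀ) := by
    intro A B
    have : (((m : ℝ)⁻¹ • ∑ k, A k) * ((m : ℝ)⁻¹ • ∑ k, B k)ᵀ)
        = ((m:ℝ)^2)⁻¹ • ∑ k, ∑ l, (A k * (B l)ᵀ) := by
      rw [transpose_smul, transpose_sum, Matrix.smul_mul, Matrix.mul_smul,
        Matrix.sum_mul, smul_smul]
      congr 1
      · rw [sq, mul_inv]
      · exact Finset.sum_congr rfl fun k _ => Matrix.mul_sum _ _ _
    show L _ = _
    rw [this, L.map_smul, map_sum]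
    simp only [map_sum, smul_eq_mul]
  rw [key C D, key C' D', ← mul_sub]
  simp only [← Finset.sum_sub_distrib]
  have hterm : ∀ k l, |L (C k * (D l)ᵀ) - L (C' k * (D' l)ᵀ)| ≤ 2 * (c^2 * V * W) := by
    intro k l
    calc |L (C k * (D l)ᵀ) - L (C' k * (D' l)ᵀ)|
        ≤ |L (C k * (D l)ᵀ)| + |L (C' k * (D' l)ᵀ)| := abs_sub _ _
      _ ≤ c^2 * V * W + c^2 * V * W := add_le_add
          (aux_bound c hc _ _ (hC k) (hD l) v w) (aux_bound c hc _ _ (hC' k) (hD' l) v w)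
      _ = 2 * (c^2 * V * W) := by ring
  have hzero : ∀ k l, k ≠ k₀ → l ≠ k₀ →
      L (C k * (D l)ᵀ) - L (C' k * (D' l)ᵀ) = 0 := by
    intro k l hk hl
    rw [(hagree k hk).1, (hagree l hl).2, sub_self]
  set d : Fin m → Fin m → ℝ := fun k l => L (C k * (D l)ᵀ) - L (C' k * (D' l)ᵀ) with hd
  have hsplit : ∑ k, ∑ l, d k l
      = (∑ l, d k₀ l) + ∑ k ∈ Finset.univ.erase k₀, d k k₀ := by
    rw [← Finset.add_sum_erase _ _ (Finset.mem_univ k₀)]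
    congr 1
    refine Finset.sum_congr rfl fun k hk => ?_
    have hk' : k ≠ k₀ := Finset.ne_of_mem_erase hk
    rw [← Finset.add_sum_erase _ _ (Finset.mem_univ k₀)]
    have : ∑ l ∈ Finset.univ.erase k₀, d k l = 0 :=
      Finset.sum_eq_zero fun l hl => hzero k l hk' (Finset.ne_of_mem_erase hl)
    rw [this, add_zero]
  have hbound : |∑ k, ∑ l, d k l| ≤ (2 * (m:ℝ) - 1) * (2 * (c^2 * V * W)) := by
    rw [hsplit]
    calc |(∑ l, d k₀ l) + ∑ k ∈ Finset.univ.erase k₀, d k k₀|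
        ≤ |∑ l, d k₀ l| + |∑ k ∈ Finset.univ.erase k₀, d k k₀| := abs_add_le _ _
      _ ≤ (∑ l : Fin m, |d k₀ l|) + ∑ k ∈ Finset.univ.erase k₀, |d k k₀| :=
          add_le_add (Finset.abs_sum_le_sum_abs _ _) (Finset.abs_sum_le_sum_abs _ _)
      _ ≤ (∑ _l : Fin m, 2 * (c^2 * V * W)) + ∑ _k ∈ Finset.univ.erase k₀, 2 * (c^2 * V * W) :=
          add_le_add (Finset.sum_le_sum fun l _ => hterm k₀ l)
            (Finset.sum_le_sum fun k _ => hterm k k₀)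
      _ = ((m:ℝ) + ((m:ℝ) - 1)) * (2 * (c^2 * V * W)) := by
          rw [Finset.sum_const, Finset.sum_const, Finset.card_erase_of_mem (Finset.mem_univ k₀),
            Finset.card_univ, Fintype.card_fin]
          have : ((m - 1 : ℕ) : ℝ) = (m:ℝ) - 1 := by
            have := Nat.cast_sub hm (R := ℝ); simpa using this
          simp [nsmul_eq_mul, this]; ring
      _ = (2 * (m:ℝ) - 1) * (2 * (c^2 * V * W)) := by ring
  calc |((m:ℝ)^2)⁻¹ * ∑ k, ∑ l, d k l| = ((m:ℝ)^2)⁻¹ * |∑ k, ∑ l, d k l| := by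
        rw [abs_mul, abs_of_nonneg (by positivity)]
    _ ≤ ((m:ℝ)^2)⁻¹ * ((2 * (m:ℝ) - 1) * (2 * (c^2 * V * W))) :=
        mul_le_mul_of_nonneg_left hbound (by positivity)
    _ = 2 * (2 * (m : ℝ) - 1) / (m : ℝ) ^ 2 * c ^ 2 * V * W := by
        field_simp
end
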